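/- (Theorem 2, approximation guarantee) Let g : (k+1)^𝒳 → ℝ≥0 be a normalized k-submodular function, w : 𝒳 → ℝ>0 a positive weight function, τ > 0 with τ ≤ max_{s∈(k+1)^𝒳} g(s), ε ∈ (0,1), and let v be a k-set of minimum weight among those with g(v) ≥ τ. If g is monotone, the k-set x returned by Algorithm 2 satisfies w(x) ≤ ((3−ε)/(2ε(1−ε)))·w(v) and g(x) ≥ (1−ε)τ/2; if k ≥ 2 and g is not assumed monotone, the k-set x returned by Algorithm 2 satisfies w(x) ≤ ((4−ε)/(3ε(1−ε)))·w(v) and g(x) ≥ (1−ε)τ/3. -/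

import Mathlib

/-- A `k`-set: an assignment of each ground element to one of `k` parts or to none
(`none` meaning the element belongs to no part).  This encodes a tuple
`(S_1, …, S_k)` of pairwise disjoint subsets of `X`. -/
abbrev KSet (X : Type*) (k : ℕ) := X → Option (Fin k)

namespace KSet

variable {X : Type*} {k : ℕ}

/-- The empty `k`-set `𝟎 = (∅, …, ∅)`. -/
def bot (X : Type*) (k : ℕ) : KSet X k := fun _ => none

/-- `le s t` is the partial order `s ⊑ t`, i.e. `Sᵢ ⊆ Tᵢ` for every `i ∈ [k]`. -/
def le (s t : KSet X k) : Prop := ∀ (x : X) (i : Fin k), s x = some i → t x = some i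

/-- The meet `s ⊓ t`, whose `i`-th component is `Sᵢ ∩ Tᵢ`. -/
def meet (s t : KSet X k) : KSet X k := fun x => if s x = t x then s x else none

/-- The join `s ⊔ t`, whose `i`-th component is `(Sᵢ ∪ Tᵢ) \ ⋃_{j ≠ i} (Sⱼ ∪ Tⱼ)`. -/
def join (s t : KSet X k) : KSet X k := fun x =>
  match s x, t x with
  | none, b => b
  | some i, none => some i
  | some i, some j => if i = j then some i else none

/-- The `k`-set `(x, i)` whose only nonempty component is `Sᵢ = {x}`. -/
def single [DecidableEq X] (x : X) (i : Fin k) : KSet X k :=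
  fun y => if y = x then some i else none

/-- `s ⊔ (x, i)`: add the element `x` to the `i`-th part of `s`
(intended for `x ∉ E(s)`). -/
def add [DecidableEq X] (s : KSet X k) (x : X) (i : Fin k) : KSet X k :=
  Function.update s x (some i)

end KSet

/-- The marginal gain `Δ_{x,i} g (s) = g (s ⊔ (x,i)) - g s`. -/
def marg {X : Type*} [DecidableEq X] {k : ℕ} (g : KSet X k → ℝ) (s : KSet X k)
    (x : X) (i : Fin k) : ℝ :=
  g (KSet.add s x i) - g s

/-- `g` is `k`-submodular: `g (s ⊓ t) + g (s ⊔ t) ≤ g s + g t` for all `k`-sets. -/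
def KSubmodular {X : Type*} {k : ℕ} (g : KSet X k → ℝ) : Prop :=
  ∀ s t : KSet X k, g (KSet.meet s t) + g (KSet.join s t) ≤ g s + g t

/-- `g` is monotone with respect to `⊑`. -/
def KMonotone {X : Type*} {k : ℕ} (g : KSet X k → ℝ) : Prop :=
  ∀ s t : KSet X k, KSet.le s t → g s ≤ g t

/-- The weight `w(s) = ∑_{x ∈ E(s)} w x` of a `k`-set. -/
def wtot {X : Type*} [Fintype X] {k : ℕ} (w : X → ℝ) (s : KSet X k) : ℝ :=
  ∑ x ∈ Finset.univ.filter (fun x => s x ≠ none), w x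

/-- A greedy chain for `g`: `c 0 = 𝟎` and each step adds one new element at a
position maximizing the marginal gain over `i ∈ [k]`. -/
def GreedyChain {X : Type*} [DecidableEq X] {k : ℕ} (g : KSet X k → ℝ) (m : ℕ)
    (c : ℕ → KSet X k) : Prop :=
  c 0 = KSet.bot X k ∧
  ∀ p, p < m → ∃ (xp : X) (ip : Fin k),
    c p xp = none ∧
    c (p + 1) = KSet.add (c p) xp ip ∧
    ∀ i : Fin k, marg g (c p) xp i ≤ marg g (c p) xp ip

/-- A choice of position in `[k]` maximizing `f`. -/
noncomputable def argmaxFin {k : ℕ} [NeZero k] (f : Fin k → ℝ) : Fin k :=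
  Classical.choose (Finset.exists_max_image Finset.univ f
    ⟨⟨0, Nat.pos_of_ne_zero (NeZero.ne k)⟩, Finset.mem_univ _⟩)

open Classical in
/-- One step of Algorithm 1, processing the arriving element `x` with current
solution `s`, threshold `τ`, density threshold `θ` and cost upper bound `A`:
if `x` is big (`w x ≤ A` and `max_i g((x,i)) ≥ τ`) then restart from `(x,i')`
with `i'` maximizing `g((x,i))`; otherwise add `(x,i')` with `i'` maximizing the
marginal gain, provided `Δ_{x,i'}g(s)/w(x) ≥ θ` and `w(s) + w(x) ≤ A`. -/
noncomputable def alg1Step {X : Type*} [Fintype X] [DecidableEq X] {k : ℕ} [NeZero k]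
    (g : KSet X k → ℝ) (w : X → ℝ) (τ θ A : ℝ) (s : KSet X k) (x : X) : KSet X k :=
  if w x ≤ A ∧ τ ≤ g (KSet.single x (argmaxFin fun i => g (KSet.single x i))) then
    KSet.single x (argmaxFin fun i => g (KSet.single x i))
  else if θ ≤ marg g s x (argmaxFin fun i => marg g s x i) / w x ∧ wtot w s + w x ≤ A then
    KSet.add s x (argmaxFin fun i => marg g s x i)
  else s

/-- Algorithm 1: starting from `𝟎`, process the elements of the ground set in
their arrival order `order`. -/
noncomputable def alg1 {X : Type*} [Fintype X] [DecidableEq X] {k : ℕ} [NeZero k]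
    (g : KSet X k → ℝ) (w : X → ℝ) (τ θ A : ℝ) (order : List X) : KSet X k :=
  order.foldl (alg1Step g w τ θ A) (KSet.bot X k)

/-- `x` is a big element: `w x ≤ A` and `max_{i ∈ [k]} g((x,i)) ≥ τ`. -/
def IsBig {X : Type*} [DecidableEq X] {k : ℕ} (g : KSet X k → ℝ) (w : X → ℝ)
    (τ A : ℝ) (x : X) : Prop :=
  w x ≤ A ∧ ∃ i : Fin k, τ ≤ g (KSet.single x i)

/-- The `j`-th guess of Algorithm 2: `λ_j = (1-ε)^j · n · w_max`. -/
noncomputable def alg2Guess {X : Type*} [Fintype X] [Nonempty X]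
    (w : X → ℝ) (ε : ℝ) (j : ℕ) : ℝ :=
  (1 - ε) ^ j * (Fintype.card X : ℝ) * Finset.univ.sup' Finset.univ_nonempty w

/-- The bound `l = ln(γ/n) / ln(1-ε)` on guess indices in Algorithm 2, where
`γ = w_min / w_max` and `n = |𝒳|`. -/
noncomputable def alg2Bound {X : Type*} [Fintype X] [Nonempty X]
    (w : X → ℝ) (ε : ℝ) : ℝ :=
  Real.log ((Finset.univ.inf' Finset.univ_nonempty w /
      Finset.univ.sup' Finset.univ_nonempty w) / (Fintype.card X : ℝ)) /
    Real.log (1 - ε)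

/-- The candidate solution `x_j` of Algorithm 2: the output of Algorithm 1 run
with guess `λ_j`, i.e. `θ_j = ετ/λ_j` and `A_j = cA·λ_j` (where `cA = (3-ε)/(2ε)`
if `g` is monotone and `cA = (4-ε)/(3ε)` otherwise). -/
noncomputable def alg2Sol {X : Type*} [Fintype X] [DecidableEq X] [Nonempty X]
    {k : ℕ} [NeZero k] (g : KSet X k → ℝ) (w : X → ℝ) (τ ε cA : ℝ)
    (order : List X) (j : ℕ) : KSet X k :=
  alg1 g w τ (ε * τ / alg2Guess w ε j) (cA * alg2Guess w ε j) order

/-- `x` is a possible output of Algorithm 2 (with `r = 2` if `g` is monotone,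
`r = 3` otherwise): `x` is a minimum-weight member of
`H = {x_j : 0 ≤ j ≤ l, g(x_j) ≥ (1-ε)τ/r}`. -/
def IsAlg2Output {X : Type*} [Fintype X] [DecidableEq X] [Nonempty X]
    {k : ℕ} [NeZero k] (g : KSet X k → ℝ) (w : X → ℝ) (τ ε cA r : ℝ)
    (order : List X) (x : KSet X k) : Prop :=
  ∃ j : ℕ, (j : ℝ) ≤ alg2Bound w ε ∧
    (1 - ε) * τ / r ≤ g (alg2Sol g w τ ε cA order j) ∧
    x = alg2Sol g w τ ε cA order j ∧
    ∀ j' : ℕ, (j' : ℝ) ≤ alg2Bound w ε →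
      (1 - ε) * τ / r ≤ g (alg2Sol g w τ ε cA order j') →
      wtot w x ≤ wtot w (alg2Sol g w τ ε cA order j')

/-!
Algorithm 1, run with a guess `λ ≥ w(v)`, either meets a big element (and keeps a value
`≥ τ` from then on), or exhausts its budget `A` with elements of density `≥ θ` (value
`≥ θ (A - λ)`), or rejects every element of `v` outside its solution for low density.
In the last case the accepted elements form a greedy chain `𝟎 = t₀ ⊑ … ⊑ t`, and the usual
exchange argument for `k`-submodular functions gives `g(v) ≤ r g(t) + θ w(v)`, with `r = 2`
for monotone `g` and `r = 3` for `k ≥ 2`, where pairwise monotonicity bounds the loss of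
overwriting a label of `v`.  Algorithm 2 tries geometrically decreasing guesses, one of which
lies in `[w(v), w(v)/(1-ε))`; the output weighs at most its budget `cA λ < cA w(v)/(1-ε)`.
-/

open Finset

local infix:50 " ⊑ " => KSet.le

namespace KSet

variable {X : Type*} {k : ℕ} {s t u o : KSet X k} {x : X}

@[simp] lemma add_self [DecidableEq X] (s : KSet X k) (x : X) (i : Fin k) : s.add x i x = some i :=
  Function.update_self _ _ _

@[simp] lemma add_of_ne [DecidableEq X] (s : KSet X k) {x y : X} (h : y ≠ x) (i : Fin k) :
    s.add x i y = s y :=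
  Function.update_of_ne h _ _

lemma le_refl (s : KSet X k) : s ⊑ s := fun _ _ h => h

lemma le_trans (hst : s ⊑ t) (htu : t ⊑ u) : s ⊑ u := fun x i h => htu x i (hst x i h)

lemma bot_le (s : KSet X k) : bot X k ⊑ s := fun _ _ h => nomatch h

lemma eq_none_of_le (hst : s ⊑ t) (hx : t x = none) : s x = none := by
  cases hs : s x with
  | none => rfl
  | some i => simp [hst x i hs] at hx

lemma le_add [DecidableEq X] (hx : s x = none) (i : Fin k) : s ⊑ s.add x i := by
  intro y j hy
  rwa [add_of_ne s (by rintro rfl; simp [hx] at hy)]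

lemma le_update_none [DecidableEq X] (hso : s ⊑ o) (hx : s x = none) :
    s ⊑ Function.update o x none := by
  intro y j hy
  rw [Function.update_of_ne (by rintro rfl; simp [hx] at hy)]
  exact hso y j hy

def extend (t o : KSet X k) : KSet X k := fun y => if t y = none then o y else t y

lemma le_extend (t o : KSet X k) : t ⊑ extend t o := by
  intro y j hy
  simp [extend, hy]

lemma extend_eq_of_le (hso : s ⊑ o) : extend s o = o := by
  funext y
  cases hs : s y with
  | none => simp [extend, hs]
  | some j => simp [extend, hs, hso y j hs]

end KSet

section Submodularity

variable {X : Type*} [DecidableEq X] {k : ℕ} {g : KSet X k → ℝ} {s t : KSet X k} {x : X}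

lemma add_eq_add_marg (g : KSet X k → ℝ) (s : KSet X k) (x : X) (i : Fin k) :
    g (s.add x i) = g s + marg g s x i := by
  simp [marg]

lemma KSubmodular.marg_antitone (hsub : KSubmodular g) (hst : s ⊑ t) (hx : t x = none)
    (i : Fin k) : marg g t x i ≤ marg g s x i := by
  have hsx := KSet.eq_none_of_le hst hx
  have hmeet : KSet.meet (s.add x i) t = s := by
    funext y
    by_cases hy : y = x
    · subst hy; simp [KSet.meet, hx, hsx]
    · cases hs : s y with
      | none => cases t y <;> simp [KSet.meet, hy, hs]
      | some j => simp [KSet.meet, hy, hs, hst y j hs]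
  have hjoin : KSet.join (s.add x i) t = t.add x i := by
    funext y
    by_cases hy : y = x
    · subst hy; simp [KSet.join, hx]
    · cases hs : s y with
      | none => simp [KSet.join, hy, hs]
      | some j => simp [KSet.join, hy, hs, hst y j hs]
  have h := hsub (s.add x i) t
  rw [hmeet, hjoin] at h
  simp only [marg]
  linarith

lemma KSubmodular.marg_add_marg_nonneg (hsub : KSubmodular g) (hx : s x = none) {i j : Fin k}
    (hij : i ≠ j) : 0 ≤ marg g s x i + marg g s x j := by
  have hmeet : KSet.meet (s.add x i) (s.add x j) = s := by
    funext y
    by_cases hy : y = x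
    · subst hy; simp [KSet.meet, hx, hij]
    · simp [KSet.meet, hy]
  have hjoin : KSet.join (s.add x i) (s.add x j) = s := by
    funext y
    by_cases hy : y = x
    · subst hy; simp [KSet.join, hx, hij]
    · cases hs : s y <;> simp [KSet.join, hy, hs]
  have h := hsub (s.add x i) (s.add x j)
  rw [hmeet, hjoin] at h
  simp only [marg]
  linarith

/-- `c = 0` for monotone `g`, and `c = 1` for `k`-submodular `g` with `k ≥ 2` by pairwise
monotonicity. -/
def WeaklyMonotone (g : KSet X k → ℝ) (c : ℝ) : Prop :=
  ∀ (s : KSet X k) (x : X), s x = none → ∀ i, ∃ j, 0 ≤ marg g s x i + c * marg g s x j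

lemma KMonotone.weaklyMonotone (hmono : KMonotone g) : WeaklyMonotone g 0 := by
  intro s x hx i
  refine ⟨i, ?_⟩
  have := hmono s (s.add x i) (KSet.le_add hx i)
  simp only [marg]
  linarith

lemma KSubmodular.weaklyMonotone (hsub : KSubmodular g) (hk : 2 ≤ k) : WeaklyMonotone g 1 := by
  intro s x hx i
  have : Nontrivial (Fin k) := Fin.nontrivial_iff_two_le.mpr hk
  obtain ⟨j, hji⟩ := exists_ne i
  exact ⟨j, by simpa using hsub.marg_add_marg_nonneg hx hji.symm⟩

lemma WeaklyMonotone.marg_nonneg_of_isMax {c : ℝ} (hweak : WeaklyMonotone g c) (hc : 0 ≤ c)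
    (hx : s x = none) {i : Fin k} (hmax : ∀ j, marg g s x j ≤ marg g s x i) :
    0 ≤ marg g s x i := by
  obtain ⟨j, hj⟩ := hweak s x hx i
  nlinarith [hmax j]

end Submodularity

section Greedy

variable {X : Type*} [DecidableEq X] {k : ℕ} {g : KSet X k → ℝ} {c : ℝ} {s t o : KSet X k}

def GreedyStep (g : KSet X k → ℝ) (s t : KSet X k) : Prop :=
  ∃ x i, s x = none ∧ (∀ j, marg g s x j ≤ marg g s x i) ∧ t = s.add x i

abbrev GreedyRun (g : KSet X k → ℝ) : KSet X k → KSet X k → Prop :=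
  Relation.ReflTransGen (GreedyStep g)

lemma GreedyRun.le (h : GreedyRun g s t) : s ⊑ t := by
  induction h with
  | refl => exact KSet.le_refl s
  | tail _ hstep ih =>
    obtain ⟨x, i, hx, -, rfl⟩ := hstep
    exact KSet.le_trans ih (KSet.le_add hx i)

lemma WeaklyMonotone.le_update_add_marg (hsub : KSubmodular g) (hweak : WeaklyMonotone g c)
    (hc : 0 ≤ c) (hso : s ⊑ o) {x : X} (hx : s x = none) {i : Fin k}
    (hmax : ∀ j, marg g s x j ≤ marg g s x i) :
    g o ≤ g (Function.update o x (some i)) + (c + 1) * marg g s x i := by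
  set a : KSet X k := Function.update o x none
  have hax : a x = none := Function.update_self _ _ _
  have hsa : s ⊑ a := KSet.le_update_none hso hx
  have hgain := hweak.marg_nonneg_of_isMax hc hx hmax
  -- `o` is `a` with `x` possibly put back in its own part, which gains at most the greedy gain
  have hoa : g o ≤ g a + marg g s x i := by
    rcases ho : o x with _ | j
    · have : a = o := by simp only [a, ← ho, Function.update_eq_self]
      rw [this]; linarith
    · have : o = a.add x j := by
        rw [KSet.add, Function.update_idem, ← ho, Function.update_eq_self]
      rw [this, add_eq_add_marg g]
      linarith [hsub.marg_antitone hsa hax j, hmax j]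
  obtain ⟨j, hj⟩ := hweak a x hax i
  have hja : c * marg g a x j ≤ c * marg g s x i :=
    mul_le_mul_of_nonneg_left ((hsub.marg_antitone hsa hax j).trans (hmax j)) hc
  have hupd : Function.update o x (some i) = a.add x i := (Function.update_idem _ _ _).symm
  rw [hupd, add_eq_add_marg g]
  linarith

/-- The optimum `o` is moved along the run by overwriting its labels with the greedy ones,
one step at a time. -/
lemma GreedyRun.exchange (hsub : KSubmodular g) (hweak : WeaklyMonotone g c) (hc : 0 ≤ c)
    (hrun : GreedyRun g s t) (hso : s ⊑ o) :
    g o + (c + 1) * g s ≤ (c + 1) * g t + g (KSet.extend t o) := by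
  induction hrun using Relation.ReflTransGen.head_induction_on generalizing o with
  | refl => rw [KSet.extend_eq_of_le hso]; linarith
  | @head s' _ hstep hrun ih =>
    obtain ⟨x, i, hx, hmax, rfl⟩ := hstep
    have hso' : s'.add x i ⊑ Function.update o x (some i) := by
      intro y j hy
      by_cases hyx : y = x
      · subst hyx; simp_all
      · rw [KSet.add_of_ne _ hyx] at hy
        rw [Function.update_of_ne hyx]
        exact hso y j hy
    have htx : t x = some i := GreedyRun.le hrun x i (KSet.add_self s' x i)
    have hext : KSet.extend t (Function.update o x (some i)) = KSet.extend t o := by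
      funext y
      by_cases hyx : y = x
      · subst hyx; simp [KSet.extend, htx]
      · simp [KSet.extend, Function.update_of_ne hyx]
    have := ih hso'
    rw [hext, add_eq_add_marg g] at this
    linarith [hweak.le_update_add_marg hsub hc hso hx hmax]

lemma KSubmodular.extend_le [Fintype X] (hsub : KSubmodular g) {b : X → ℝ} (hb : ∀ x, 0 ≤ b x)
    (hmarg : ∀ x i, o x = some i → t x = none → marg g t x i ≤ b x) :
    g (KSet.extend t o) ≤ g t + ∑ x ∈ univ.filter (fun x => o x ≠ none), b x := by
  suffices key : ∀ D : Finset X,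
      g (KSet.extend t (D.piecewise o (KSet.bot X k))) ≤ g t + ∑ x ∈ D, b x by
    convert key _ using 3
    funext y
    by_cases hy : o y = none <;> simp [Finset.piecewise, hy, KSet.bot]
  intro D
  induction D using Finset.induction_on with
  | empty =>
    have : KSet.extend t (KSet.bot X k) = t := by
      funext y; by_cases h : t y = none <;> simp [KSet.extend, KSet.bot, h]
    simp [this]
  | insert a D ha ih =>
    set u : KSet X k := KSet.extend t (D.piecewise o (KSet.bot X k))
    have hua : u a = t a := by
      by_cases h : t a = none <;> simp [u, KSet.extend, ha, KSet.bot, h]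
    rw [Finset.sum_insert ha, Finset.piecewise_insert]
    by_cases hnew : t a = none ∧ ∃ i, o a = some i
    · obtain ⟨hta, i, hoa⟩ := hnew
      have : KSet.extend t (Function.update (D.piecewise o (KSet.bot X k)) a (o a)) =
          u.add a i := by
        funext y
        by_cases hy : y = a
        · subst hy; simp [KSet.extend, hta, hoa]
        · simp [u, KSet.extend, hy]
      rw [this, add_eq_add_marg g]
      linarith [hsub.marg_antitone (KSet.le_extend t _) (hua.trans hta) i, hmarg a i hoa hta]
    · have : KSet.extend t (Function.update (D.piecewise o (KSet.bot X k)) a (o a)) = u := by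
        funext y
        by_cases hy : y = a
        · subst hy; cases hta : t y <;> cases hoa : o y <;> simp_all [KSet.extend]
        · simp [u, KSet.extend, hy]
      rw [this]; linarith [hb a]

theorem GreedyRun.le_mul_add_sum [Fintype X] (hsub : KSubmodular g) (hweak : WeaklyMonotone g c)
    (hc : 0 ≤ c) (hnorm : g (KSet.bot X k) = 0) (hrun : GreedyRun g (KSet.bot X k) t)
    {b : X → ℝ} (hb : ∀ x, 0 ≤ b x)
    (hmarg : ∀ x i, o x = some i → t x = none → marg g t x i ≤ b x) :
    g o ≤ (c + 2) * g t + ∑ x ∈ univ.filter (fun x => o x ≠ none), b x := by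
  have h1 := hrun.exchange hsub hweak hc (KSet.bot_le o)
  have h2 := hsub.extend_le hb hmarg
  rw [hnorm] at h1
  linarith

end Greedy

section Weight

variable {X : Type*} [Fintype X] {k : ℕ} {w : X → ℝ} {s t : KSet X k}

lemma wtot_bot : wtot w (KSet.bot X k) = 0 := by
  simp [wtot, KSet.bot]

lemma wtot_single [DecidableEq X] (x : X) (i : Fin k) : wtot w (KSet.single x i) = w x := by
  have : univ.filter (fun y => KSet.single x i y ≠ none) = {x} := by
    ext y; by_cases hy : y = x <;> simp [KSet.single, hy]
  rw [wtot, this, sum_singleton]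

lemma wtot_mono (hw : ∀ x, 0 ≤ w x) (hst : s ⊑ t) : wtot w s ≤ wtot w t := by
  refine sum_le_sum_of_subset_of_nonneg (fun y => ?_) (fun y _ _ => hw y)
  simp only [mem_filter, mem_univ, true_and]
  intro hy
  obtain ⟨j, hj⟩ := Option.ne_none_iff_exists'.mp hy
  simp [hst y j hj]

lemma wtot_add_le [DecidableEq X] (hw : ∀ x, 0 ≤ w x) (s : KSet X k) (x : X) (i : Fin k) :
    wtot w (s.add x i) ≤ w x + wtot w s := by
  by_cases hx : s x = none
  · calc wtot w (s.add x i) ≤ ∑ y ∈ insert x (univ.filter fun y => s y ≠ none), w y := by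
          refine sum_le_sum_of_subset_of_nonneg (fun y => ?_) (fun y _ _ => hw y)
          by_cases hy : y = x <;> simp [hy]
      _ = w x + wtot w s := sum_insert (by simp [hx])
  · calc wtot w (s.add x i) ≤ wtot w s := by
          refine sum_le_sum_of_subset_of_nonneg (fun y => ?_) (fun y _ _ => hw y)
          by_cases hy : y = x <;> simp [hy, hx]
      _ ≤ w x + wtot w s := le_add_of_nonneg_left (hw x)

lemma le_wtot_of_ne_none (hw : ∀ x, 0 ≤ w x) {x : X} (hx : s x ≠ none) : w x ≤ wtot w s :=
  single_le_sum (fun y _ => hw y) (by simp [hx])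

end Weight

section Algorithm1

variable {X : Type*} [Fintype X] [DecidableEq X] {k : ℕ} [NeZero k] {g : KSet X k → ℝ}
  {w : X → ℝ} {τ θ A : ℝ} {s : KSet X k} {x : X} {L : List X}

lemma le_argmaxFin (f : Fin k → ℝ) (i : Fin k) : f i ≤ f (argmaxFin f) :=
  (Classical.choose_spec (exists_max_image univ f
    ⟨⟨0, Nat.pos_of_ne_zero (NeZero.ne k)⟩, mem_univ _⟩)).2 i (mem_univ i)

lemma le_alg1Step_of_isBig (hx : IsBig g w τ A x) (s : KSet X k) :
    τ ≤ g (alg1Step g w τ θ A s x) := by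
  obtain ⟨hwx, i, hi⟩ := hx
  have hτ := hi.trans (le_argmaxFin (fun i => g (KSet.single x i)) i)
  simp only [alg1Step]
  rw [if_pos ⟨hwx, hτ⟩]
  exact hτ

lemma le_alg1Step (hw : ∀ x, 0 < w x) (hθ : 0 ≤ θ) (h : τ ≤ g s) (x : X) :
    τ ≤ g (alg1Step g w τ θ A s x) := by
  simp only [alg1Step]
  split_ifs with hbig hacc
  · exact hbig.2
  · rw [add_eq_add_marg g]
    have := (le_div_iff₀ (hw x)).mp hacc.1
    nlinarith [hw x]
  · exact h

lemma wtot_alg1Step_le (hw : ∀ x, 0 < w x) (h : wtot w s ≤ A) (x : X) :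
    wtot w (alg1Step g w τ θ A s x) ≤ A := by
  simp only [alg1Step]
  split_ifs with hbig hacc
  · rw [wtot_single]; exact hbig.1
  · linarith [wtot_add_le (fun y => (hw y).le) s x (argmaxFin fun i => marg g s x i)]
  · exact h

lemma alg1Step_of_not_isBig (hw : ∀ x, 0 < w x) (hx : ¬ IsBig g w τ A x) (s : KSet X k) :
    (∃ i, (∀ j, marg g s x j ≤ marg g s x i) ∧ θ * w x ≤ marg g s x i ∧
      alg1Step g w τ θ A s x = s.add x i) ∨
    (alg1Step g w τ θ A s x = s ∧ ((∀ i, marg g s x i < θ * w x) ∨ A < wtot w s + w x)) := by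
  simp only [alg1Step]
  split_ifs with hbig hacc
  · exact absurd ⟨hbig.1, _, hbig.2⟩ hx
  · exact Or.inl ⟨_, le_argmaxFin _, (le_div_iff₀ (hw x)).mp hacc.1, rfl⟩
  · refine Or.inr ⟨rfl, ?_⟩
    rcases not_and_or.mp hacc with hlow | hcap
    · refine Or.inl fun i => (le_argmaxFin (fun i => marg g s x i) i).trans_lt ?_
      exact (div_lt_iff₀ (hw x)).mp (not_le.mp hlow)
    · exact Or.inr (not_le.mp hcap)

lemma le_foldl_alg1Step_of_isBig (hw : ∀ x, 0 < w x) (hθ : 0 ≤ θ) (hxL : x ∈ L)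
    (hx : IsBig g w τ A x) (s : KSet X k) : τ ≤ g (L.foldl (alg1Step g w τ θ A) s) := by
  obtain ⟨l₁, l₂, rfl⟩ := List.append_of_mem hxL
  rw [List.foldl_append, List.foldl_cons]
  exact List.foldlRecOn (motive := fun s => τ ≤ g s) l₂ _ (le_alg1Step_of_isBig hx _)
    fun s hs y _ => le_alg1Step hw hθ hs y

lemma wtot_alg1_le (hw : ∀ x, 0 < w x) (hA : 0 ≤ A) (order : List X) :
    wtot w (alg1 g w τ θ A order) ≤ A :=
  List.foldlRecOn (motive := fun s => wtot w s ≤ A) order _ (by rwa [wtot_bot])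
    fun s hs y _ => wtot_alg1Step_le hw hs y

lemma density_foldl_alg1Step (hw : ∀ x, 0 < w x) (hθ : 0 ≤ θ) (hL : ∀ x ∈ L, ¬ IsBig g w τ A x)
    (hs : θ * wtot w s ≤ g s) :
    θ * wtot w (L.foldl (alg1Step g w τ θ A) s) ≤ g (L.foldl (alg1Step g w τ θ A) s) := by
  refine List.foldlRecOn (motive := fun s => θ * wtot w s ≤ g s) L _ hs fun s hs y hy => ?_
  rcases alg1Step_of_not_isBig hw (hL y hy) s with ⟨i, -, hgain, heq⟩ | ⟨heq, -⟩
  · rw [heq, add_eq_add_marg g]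
    have := mul_le_mul_of_nonneg_left (wtot_add_le (fun y => (hw y).le) s y i) hθ
    linarith
  · rwa [heq]

lemma alg1Step_fresh {a : X} (hw : ∀ x, 0 < w x) (hnd : (a :: L).Nodup)
    (hL : ∀ x ∈ a :: L, ¬ IsBig g w τ A x) (hs : ∀ x ∈ a :: L, s x = none) :
    ∀ y ∈ L, alg1Step g w τ θ A s a y = none := by
  intro y hy
  have hya : y ≠ a := by rintro rfl; exact (List.nodup_cons.mp hnd).1 hy
  have hsy := hs y (List.mem_cons_of_mem a hy)
  rcases alg1Step_of_not_isBig (θ := θ) hw (hL a List.mem_cons_self) s with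
    ⟨i, -, -, heq⟩ | ⟨heq, -⟩
  · rw [heq, KSet.add_of_ne s hya, hsy]
  · rw [heq, hsy]

lemma greedyRun_foldl_alg1Step (hw : ∀ x, 0 < w x) (hnd : L.Nodup)
    (hL : ∀ x ∈ L, ¬ IsBig g w τ A x) (hs : ∀ x ∈ L, s x = none) :
    GreedyRun g s (L.foldl (alg1Step g w τ θ A) s) := by
  induction L generalizing s with
  | nil => exact Relation.ReflTransGen.refl
  | cons a L ih =>
    have hs' := alg1Step_fresh (θ := θ) hw hnd hL hs
    rw [List.nodup_cons] at hnd
    have hrun := ih hnd.2 (fun y hy => hL y (List.mem_cons_of_mem a hy)) hs'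
    rw [List.foldl_cons]
    rcases alg1Step_of_not_isBig (θ := θ) hw (hL a List.mem_cons_self) s with
      ⟨i, hmax, -, heq⟩ | ⟨heq, -⟩
    · rw [heq] at hrun ⊢
      exact Relation.ReflTransGen.head ⟨a, i, hs a List.mem_cons_self, hmax, rfl⟩ hrun
    · rwa [heq] at hrun ⊢

/-- The reason for rejecting an element persists along the rest of the run, since marginal
gains only decrease and the weight only grows. -/
lemma foldl_alg1Step_rejected (hsub : KSubmodular g) (hw : ∀ x, 0 < w x) (hnd : L.Nodup)
    (hL : ∀ x ∈ L, ¬ IsBig g w τ A x) (hs : ∀ x ∈ L, s x = none) (hxL : x ∈ L)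
    (hx : L.foldl (alg1Step g w τ θ A) s x = none) :
    (∀ i, marg g (L.foldl (alg1Step g w τ θ A) s) x i < θ * w x) ∨
      A < wtot w (L.foldl (alg1Step g w τ θ A) s) + w x := by
  induction L generalizing s with
  | nil => simp at hxL
  | cons a L ih =>
    have hs' := alg1Step_fresh (θ := θ) hw hnd hL hs
    rw [List.nodup_cons] at hnd
    have hL' : ∀ y ∈ L, ¬ IsBig g w τ A y := fun y hy => hL y (List.mem_cons_of_mem a hy)
    rw [List.foldl_cons] at hx ⊢
    rcases List.mem_cons.mp hxL with rfl | hxL'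
    · have hrun := greedyRun_foldl_alg1Step (θ := θ) hw hnd.2 hL' hs'
      rcases alg1Step_of_not_isBig (θ := θ) hw (hL x List.mem_cons_self) s with
        ⟨i, -, -, heq⟩ | ⟨heq, hlow | hcap⟩
      · have := GreedyRun.le hrun x i (by rw [heq]; exact KSet.add_self s x i)
        simp [this] at hx
      · rw [heq] at hrun hx ⊢
        exact Or.inl fun i => ((hsub.marg_antitone (GreedyRun.le hrun) hx i).trans_lt (hlow i))
      · rw [heq] at hrun ⊢
        have := wtot_mono (fun y => (hw y).le) (GreedyRun.le hrun)
        exact Or.inr (by linarith)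
    · exact ih hnd.2 hL' hs' hxL' hx

end Algorithm1

section Guarantees

variable {X : Type*} [Fintype X] [DecidableEq X] {k : ℕ} [NeZero k] {g : KSet X k → ℝ}
  {w : X → ℝ} {τ θ A c : ℝ} {v : KSet X k} {order : List X}

theorem le_alg1 (hsub : KSubmodular g) (hweak : WeaklyMonotone g c) (hc : 0 ≤ c)
    (hnorm : g (KSet.bot X k) = 0) (hw : ∀ x, 0 < w x) (hθ : 0 ≤ θ) (hnd : order.Nodup)
    (hfull : ∀ x, x ∈ order) (hgv : τ ≤ g v) {b : ℝ} (hbτ : b ≤ τ)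
    (hbA : b ≤ θ * (A - wtot w v)) (hbv : (c + 2) * b ≤ τ - θ * wtot w v) :
    b ≤ g (alg1 g w τ θ A order) := by
  by_cases hbig : ∃ x ∈ order, IsBig g w τ A x
  · obtain ⟨x, hxo, hx⟩ := hbig
    exact hbτ.trans (le_foldl_alg1Step_of_isBig hw hθ hxo hx _)
  push Not at hbig
  set t := alg1 g w τ θ A order
  have hfresh : ∀ x ∈ order, KSet.bot X k x = none := fun _ _ => rfl
  have hdense : θ * wtot w t ≤ g t :=
    density_foldl_alg1Step hw hθ hbig (by rw [wtot_bot, hnorm, mul_zero])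
  by_cases hcap : ∃ x, v x ≠ none ∧ t x = none ∧ A < wtot w t + w x
  · obtain ⟨x, hvx, -, hAx⟩ := hcap
    have := le_wtot_of_ne_none (fun y => (hw y).le) hvx
    calc b ≤ θ * (A - wtot w v) := hbA
      _ ≤ θ * wtot w t := by gcongr; linarith
      _ ≤ g t := hdense
  push Not at hcap
  have hlow : ∀ x i, v x = some i → t x = none → marg g t x i ≤ θ * w x :=
    fun x i hvx htx =>
      (((foldl_alg1Step_rejected hsub hw hnd hbig hfresh (hfull x) htx).resolve_right
        (not_lt.mpr (hcap x (by simp [hvx]) htx))) i).le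
  have hrun : GreedyRun g (KSet.bot X k) t := greedyRun_foldl_alg1Step hw hnd hbig hfresh
  have happrox : g v ≤ (c + 2) * g t + θ * wtot w v := by
    rw [wtot, mul_sum]
    exact hrun.le_mul_add_sum hsub hweak hc hnorm (fun x => mul_nonneg hθ (hw x).le) hlow
  have : (c + 2) * b ≤ (c + 2) * g t := by linarith
  exact le_of_mul_le_mul_left this (by linarith)

theorem le_alg1_of_wtot_le (hsub : KSubmodular g) (hweak : WeaklyMonotone g c) (hc : 0 ≤ c)
    (hnorm : g (KSet.bot X k) = 0) (hw : ∀ x, 0 < w x) (hnd : order.Nodup)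
    (hfull : ∀ x, x ∈ order) (hgv : τ ≤ g v) {ε r cA lam : ℝ} (hτ : 0 < τ) (hε0 : 0 < ε)
    (hε1 : ε < 1) (hr : c + 2 ≤ r) (hcA : (1 - ε) / r ≤ ε * (cA - 1)) (hlam : 0 < lam)
    (hv : wtot w v ≤ lam) :
    (1 - ε) * τ / r ≤ g (alg1 g w τ (ε * τ / lam) (cA * lam) order) := by
  have hr0 : 0 < r := by linarith
  have hθv : ε * τ / lam * wtot w v ≤ ε * τ :=
    calc ε * τ / lam * wtot w v ≤ ε * τ / lam * lam := by gcongr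
      _ = ε * τ := div_mul_cancel₀ _ hlam.ne'
  refine le_alg1 hsub hweak hc hnorm hw (by positivity) hnd hfull hgv ?_ ?_ ?_
  · rw [div_le_iff₀ hr0]; nlinarith
  · calc (1 - ε) * τ / r = (1 - ε) / r * τ := by ring
      _ ≤ ε * (cA - 1) * τ := by gcongr
      _ = ε * τ / lam * (cA * lam - lam) := by field_simp
      _ ≤ ε * τ / lam * (cA * lam - wtot w v) := by gcongr
  · calc (c + 2) * ((1 - ε) * τ / r) ≤ r * ((1 - ε) * τ / r) := by gcongr
      _ = τ - ε * τ := by field_simp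
      _ ≤ τ - ε * τ / lam * wtot w v := by linarith

end Guarantees

section Algorithm2

variable {X : Type*} [Fintype X] [Nonempty X] {w : X → ℝ} {ε : ℝ}

lemma alg2Guess_pos (hw : ∀ x, 0 < w x) (hε1 : ε < 1) (j : ℕ) : 0 < alg2Guess w ε j := by
  obtain ⟨x⟩ := ‹Nonempty X›
  have := (hw x).trans_le (le_sup' w (mem_univ x))
  have : (0 : ℝ) < 1 - ε := by linarith
  unfold alg2Guess
  positivity

lemma alg2Guess_succ (j : ℕ) : alg2Guess w ε (j + 1) = (1 - ε) * alg2Guess w ε j := by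
  simp only [alg2Guess, pow_succ]; ring

lemma wtot_le_alg2Guess_zero {k : ℕ} (hw : ∀ x, 0 ≤ w x) (s : KSet X k) :
    wtot w s ≤ alg2Guess w ε 0 := by
  rw [alg2Guess, pow_zero, one_mul, ← card_univ, ← nsmul_eq_mul]
  exact (sum_le_sum_of_subset_of_nonneg (filter_subset _ _) fun x _ _ => hw x).trans
    (sum_le_card_nsmul _ _ _ fun x _ => le_sup' w (mem_univ x))

lemma exists_alg2Guess_bracket (hw : ∀ x, 0 < w x) (hε0 : 0 < ε) (hε1 : ε < 1) {W : ℝ}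
    (hW : 0 < W) (hW0 : W ≤ alg2Guess w ε 0) :
    ∃ j, (1 - ε) * alg2Guess w ε j < W ∧ W ≤ alg2Guess w ε j := by
  have hex : ∃ j, alg2Guess w ε j < W := by
    obtain ⟨j, hj⟩ := exists_pow_lt_of_lt_one (div_pos hW (alg2Guess_pos hw hε1 0))
      (by linarith : 1 - ε < 1)
    refine ⟨j, ?_⟩
    rw [lt_div_iff₀ (alg2Guess_pos hw hε1 0)] at hj
    simpa [alg2Guess, mul_assoc] using hj
  have hj0 : Nat.find hex ≠ 0 := fun h => by
    have := Nat.find_spec hex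
    rw [h] at this
    linarith
  obtain ⟨j, hj⟩ := Nat.exists_eq_add_one_of_ne_zero hj0
  refine ⟨j, ?_, not_lt.mp (Nat.find_min hex (by omega))⟩
  rw [← alg2Guess_succ, ← hj]
  exact Nat.find_spec hex

lemma le_alg2Bound (hε0 : 0 < ε) (hε1 : ε < 1) (hw : ∀ x, 0 < w x) {j : ℕ}
    (hj : univ.inf' univ_nonempty w ≤ alg2Guess w ε j) : (j : ℝ) ≤ alg2Bound w ε := by
  obtain ⟨x, -, hx⟩ := exists_mem_eq_inf' univ_nonempty w
  have hmin : 0 < univ.inf' univ_nonempty w := hx ▸ hw x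
  have hmax : 0 < univ.sup' univ_nonempty w := (hw x).trans_le (le_sup' w (mem_univ x))
  have hn : (0 : ℝ) < Fintype.card X := by exact_mod_cast Fintype.card_pos
  have hpow : univ.inf' univ_nonempty w / univ.sup' univ_nonempty w / Fintype.card X ≤
      (1 - ε) ^ j := by
    rw [div_div, div_le_iff₀ (by positivity)]
    unfold alg2Guess at hj
    linarith
  rw [alg2Bound, le_div_iff_of_neg (Real.log_neg (by linarith) (by linarith)), ← Real.log_pow]
  exact Real.log_le_log (by positivity) hpow

variable [DecidableEq X] {k : ℕ} [NeZero k] {g : KSet X k → ℝ} {τ cA r : ℝ} {order : List X}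

lemma exists_isAlg2Output {j : ℕ} (hj : (j : ℝ) ≤ alg2Bound w ε)
    (hgood : (1 - ε) * τ / r ≤ g (alg2Sol g w τ ε cA order j)) :
    ∃ x, IsAlg2Output g w τ ε cA r order x := by
  have hl : 0 ≤ alg2Bound w ε := (Nat.cast_nonneg j).trans hj
  let H := (range (⌊alg2Bound w ε⌋₊ + 1)).filter
    fun j => (1 - ε) * τ / r ≤ g (alg2Sol g w τ ε cA order j)
  have hmem : ∀ j, j ∈ H ↔ (j : ℝ) ≤ alg2Bound w ε ∧
      (1 - ε) * τ / r ≤ g (alg2Sol g w τ ε cA order j) := fun j => by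
    rw [mem_filter, mem_range, Nat.lt_succ_iff, Nat.le_floor_iff hl]
  obtain ⟨jm, hjm, hmin⟩ :=
    exists_min_image H (fun j => wtot w (alg2Sol g w τ ε cA order j)) ⟨j, (hmem j).2 ⟨hj, hgood⟩⟩
  exact ⟨_, jm, ((hmem jm).1 hjm).1, ((hmem jm).1 hjm).2, rfl,
    fun j' hj' hgood' => hmin j' ((hmem j').2 ⟨hj', hgood'⟩)⟩

theorem alg2_guarantee (hsub : KSubmodular g) {c : ℝ} (hweak : WeaklyMonotone g c) (hc : 0 ≤ c)
    (hnorm : g (KSet.bot X k) = 0) (hw : ∀ x, 0 < w x) (hτ : 0 < τ) (hε0 : 0 < ε)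
    (hε1 : ε < 1) (hr : c + 2 ≤ r) (hcA : (1 - ε) / r ≤ ε * (cA - 1)) (hnd : order.Nodup)
    (hfull : ∀ x, x ∈ order) {v : KSet X k} (hgv : τ ≤ g v) :
    (∃ x, IsAlg2Output g w τ ε cA r order x) ∧
      ∀ x, IsAlg2Output g w τ ε cA r order x →
        wtot w x ≤ cA / (1 - ε) * wtot w v ∧ (1 - ε) * τ / r ≤ g x := by
  have hw0 : ∀ x, 0 ≤ w x := fun x => (hw x).le
  obtain ⟨y, hy⟩ : ∃ y, v y ≠ none := by
    by_contra! h
    rw [show v = KSet.bot X k from funext h, hnorm] at hgv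
    linarith
  have hwv := le_wtot_of_ne_none hw0 hy
  obtain ⟨j, hjlt, hjle⟩ := exists_alg2Guess_bracket hw hε0 hε1 ((hw y).trans_le hwv)
    (wtot_le_alg2Guess_zero hw0 v)
  have hjl : (j : ℝ) ≤ alg2Bound w ε :=
    le_alg2Bound hε0 hε1 hw (((inf'_le w (mem_univ y)).trans hwv).trans hjle)
  have hgood : (1 - ε) * τ / r ≤ g (alg2Sol g w τ ε cA order j) :=
    le_alg1_of_wtot_le hsub hweak hc hnorm hw hnd hfull hgv hτ hε0 hε1 hr hcA
      (alg2Guess_pos hw hε1 j) hjle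
  have hcA0 : 0 ≤ cA := by
    have : 0 < (1 - ε) / r := div_pos (by linarith) (by linarith)
    nlinarith
  refine ⟨exists_isAlg2Output hjl hgood, ?_⟩
  rintro x ⟨j', -, hgx, rfl, hmin⟩
  refine ⟨?_, hgx⟩
  calc wtot w (alg2Sol g w τ ε cA order j')
      ≤ wtot w (alg2Sol g w τ ε cA order j) := hmin j hjl hgood
    _ ≤ cA * alg2Guess w ε j := wtot_alg1_le hw (mul_nonneg hcA0 (alg2Guess_pos hw hε1 j).le) _
    _ ≤ cA / (1 - ε) * wtot w v := by
      rw [div_mul_eq_mul_div, le_div_iff₀ (by linarith), mul_assoc, mul_comm (alg2Guess w ε j)]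
      gcongr

end Algorithm2

theorem theorem2_guarantee_general {X : Type*} [Fintype X] [DecidableEq X] [Nonempty X]
    {k : ℕ} [NeZero k]
    (g : KSet X k → ℝ) (hsub : KSubmodular g)
    (hnorm : g (KSet.bot X k) = 0)
    (w : X → ℝ) (hw : ∀ x, 0 < w x)
    (τ ε : ℝ) (hτ : 0 < τ)
    (hε0 : 0 < ε) (hε1 : ε < 1)
    (v : KSet X k) (hgv : τ ≤ g v)
    (order : List X) (hnodup : order.Nodup) (hfull : ∀ x : X, x ∈ order) :
    (KMonotone g →
      (∃ x : KSet X k, IsAlg2Output g w τ ε ((3 - ε) / (2 * ε)) 2 order x) ∧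
      ∀ x : KSet X k, IsAlg2Output g w τ ε ((3 - ε) / (2 * ε)) 2 order x →
        wtot w x ≤ (3 - ε) / (2 * ε * (1 - ε)) * wtot w v ∧
        (1 - ε) * τ / 2 ≤ g x) ∧
    (2 ≤ k →
      (∃ x : KSet X k, IsAlg2Output g w τ ε ((4 - ε) / (3 * ε)) 3 order x) ∧
      ∀ x : KSet X k, IsAlg2Output g w τ ε ((4 - ε) / (3 * ε)) 3 order x →
        wtot w x ≤ (4 - ε) / (3 * ε * (1 - ε)) * wtot w v ∧
        (1 - ε) * τ / 3 ≤ g x) := by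
  refine ⟨fun hmono => ?_, fun hk => ?_⟩
  · have hcA : (1 - ε) / 2 ≤ ε * ((3 - ε) / (2 * ε) - 1) := by
      field_simp; linarith
    simpa only [div_div] using alg2_guarantee hsub hmono.weaklyMonotone le_rfl hnorm hw hτ hε0
      hε1 (by norm_num) hcA hnodup hfull hgv
  · have hcA : (1 - ε) / 3 ≤ ε * ((4 - ε) / (3 * ε) - 1) := by
      field_simp; linarith
    simpa only [div_div] using alg2_guarantee hsub (hsub.weaklyMonotone hk) zero_le_one hnorm hw
      hτ hε0 hε1 (by norm_num) hcA hnodup hfull hgv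

/-- **Theorem 2, approximation guarantee.** Let `v` be a
minimum-weight `k`-set among those with `g v ≥ τ`.  If `g` is monotone, any
output of Algorithm 2 satisfies `w(x) ≤ ((3-ε)/(2ε(1-ε)))·w(v)` and
`g x ≥ (1-ε)τ/2`; if `k ≥ 2` (for `g` not assumed monotone), any output of
Algorithm 2 satisfies `w(x) ≤ ((4-ε)/(3ε(1-ε)))·w(v)` and `g x ≥ (1-ε)τ/3`. -/
theorem theorem2_guarantee {X : Type*} [Fintype X] [DecidableEq X] [Nonempty X]
    {k : ℕ} [NeZero k]
    (g : KSet X k → ℝ) (hnn : ∀ s : KSet X k, 0 ≤ g s) (hsub : KSubmodular g)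
    (hnorm : g (KSet.bot X k) = 0)
    (w : X → ℝ) (hw : ∀ x, 0 < w x)
    (τ ε : ℝ) (hτ : 0 < τ) (hτle : ∃ s : KSet X k, τ ≤ g s)
    (hε0 : 0 < ε) (hε1 : ε < 1)
    (v : KSet X k) (hgv : τ ≤ g v)
    (hvmin : ∀ u : KSet X k, τ ≤ g u → wtot w v ≤ wtot w u)
    (order : List X) (hnodup : order.Nodup) (hfull : ∀ x : X, x ∈ order) :
    (KMonotone g →
      (∃ x : KSet X k, IsAlg2Output g w τ ε ((3 - ε) / (2 * ε)) 2 order x) ∧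
      ∀ x : KSet X k, IsAlg2Output g w τ ε ((3 - ε) / (2 * ε)) 2 order x →
        wtot w x ≤ (3 - ε) / (2 * ε * (1 - ε)) * wtot w v ∧
        (1 - ε) * τ / 2 ≤ g x) ∧
    (2 ≤ k →
      (∃ x : KSet X k, IsAlg2Output g w τ ε ((4 - ε) / (3 * ε)) 3 order x) ∧
      ∀ x : KSet X k, IsAlg2Output g w τ ε ((4 - ε) / (3 * ε)) 3 order x →
        wtot w x ≤ (4 - ε) / (3 * ε * (1 - ε)) * wtot w v ∧
        (1 - ε) * τ / 3 ≤ g x) :=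
  theorem2_guarantee_general g hsub hnorm w hw τ ε hτ hε0 hε1 v hgv order hnodup hfull
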